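/- The word x_3 over {0,1,2}, obtained from the characteristic Sturmian word of slope √2 − 1 by replacing the n-th occurrence of 0 by the n-th letter of (01)^ω and each 1 by 2, has critical exponent 2 + √2/2. -/

import Mathlib

/-- Standard words associated to the continued fraction `[0; d 1, d 2, ...]`. -/
def stdWord (d : ℕ → ℕ) : ℕ → List ℕ
  | 0 => [0]
  | 1 => List.replicate (d 1 - 1) 0 ++ [1]
  | (n+2) => (List.replicate (d (n+2)) (stdWord d (n+1))).flatten ++ stdWord d n

/-- Partial quotients of `√2 - 1 = [0; 2, 2, 2, ...]`. -/
def d2 (i : ℕ) : ℕ := if i = 0 then 0 else 2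

/-- The characteristic Sturmian word of slope `[0; d 1, d 2, ...]`
(the limit of the standard words). -/
def charWord (d : ℕ → ℕ) (n : ℕ) : ℕ := (stdWord d (n+1)).getD n 0

/-- `p` is a period of the finite word `w`. -/
def hasPeriod {α : Type*} (w : List α) (p : ℕ) : Prop :=
  0 < p ∧ ∀ i : ℕ, i + p < w.length → w[i]? = w[i + p]?

/-- The finite word `u` occurs in the infinite word `x` at position `i`. -/
def OccursAt (u : List ℕ) (x : ℕ → ℕ) (i : ℕ) : Prop :=
  u = (List.range u.length).map fun j => x (i + j)

/-- `u` is a factor of the infinite word `x`. -/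
def IsFactorI (u : List ℕ) (x : ℕ → ℕ) : Prop :=
  ∃ i : ℕ, OccursAt u x i

/-- Number of occurrences of the letter `a` among `x 0, ..., x (n-1)`. -/
def countBelow (x : ℕ → ℕ) (a n : ℕ) : ℕ :=
  ((Finset.range n).filter fun j => x j = a).card

/-- The set of exponents of nonempty factors of the infinite word `x`. -/
def expSet (x : ℕ → ℕ) : Set ℝ :=
  {e | ∃ (u : List ℕ) (p : ℕ), IsFactorI u x ∧ u ≠ [] ∧ hasPeriod u p ∧
        e = (u.length : ℝ) / p}

/-- The word `x₃`: replace the `n`-th occurrence of `0` in the characteristic Sturmian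
word of slope `√2 - 1` by the `n`-th letter of `(01)^ω`, and each `1` by `2`. -/
def x3 (n : ℕ) : ℕ :=
  if charWord d2 n = 0 then countBelow (charWord d2) 0 n % 2 else 2

/-!
The characteristic word of slope `√2 - 1` is the word of increments of the Beatty sequence
`⌊(n + 1)√2⌋` (both are fixed by the morphism `0 ↦ 01`, `1 ↦ 010`), and the number of `0`s
before position `n` is `2n + 1 - ⌊(n + 1)√2⌋`, so at a `0` the letter of `x₃` is the parity of
the Beatty sequence. A factor of `x₃` of length `L ≥ p + 2` with period `p` therefore forces
`⌊(n + 1)√2⌋` to grow by one and the same even number `2c` over each period inside the factor.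
The fractional parts of `(n + 1)√2` then move by the fixed amount `p√2 - 2c` under `n ↦ n + p`
and by `p - c√2`, of the same sign, under `n ↦ n - c`; an extremal fractional part in the factor
can do neither, which gives `L ≤ 2p + c - 2 < (2 + √2/2) p`.

Conversely, for `a = s_{k+1}` and `b = s_k` the words `ab` and `ba` differ only in their last
two letters, so `s_{k+3} = aabaaba` has a factor of length `2|ab| + |a| - 2` with period `|ab|`,
and every period contains an even number of `0`s. Since `|ab|² - 2|a|² = ±1`, these exponents
approach `2 + √2/2`.
-/

def FactorHasPeriod (x : ℕ → ℕ) (i L p : ℕ) : Prop :=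
  ∀ j, j + p < L → x (i + j) = x (i + j + p)

lemma OccursAt.getElem? {u : List ℕ} {x : ℕ → ℕ} {i j : ℕ} (h : OccursAt u x i)
    (hj : j < u.length) : u[j]? = some (x (i + j)) := by
  rw [h]
  simp [hj]

lemma mem_expSet_iff {x : ℕ → ℕ} {e : ℝ} :
    e ∈ expSet x ↔ ∃ i L p, 0 < L ∧ 0 < p ∧ FactorHasPeriod x i L p ∧ e = L / p := by
  constructor
  · rintro ⟨u, p, ⟨i, hu⟩, hne, ⟨hp, hper⟩, rfl⟩
    refine ⟨i, u.length, p, List.length_pos_of_ne_nil hne, hp, fun j hj => ?_, rfl⟩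
    have := hper j hj
    rwa [hu.getElem? (by omega), hu.getElem? hj, Option.some_inj, ← add_assoc] at this
  · rintro ⟨i, L, p, hL, hp, h, rfl⟩
    have hocc : OccursAt ((List.range L).map fun j => x (i + j)) x i := by simp [OccursAt]
    refine ⟨_, p, ⟨i, hocc⟩, by simp; omega, ⟨hp, fun j hj => ?_⟩, by simp⟩
    simp only [List.length_map, List.length_range] at hj
    rw [hocc.getElem? (by simp; omega), hocc.getElem? (by simp; omega), ← add_assoc, h j hj]

lemma OccursAt.factorHasPeriod {z : List ℕ} {x : ℕ → ℕ} {i p : ℕ} (h₁ : OccursAt z x i)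
    (h₂ : OccursAt z x (i + p)) : FactorHasPeriod x i (z.length + p) p := fun j hj => by
  have h₁ := h₁.getElem? (j := j) (by omega)
  rw [h₂.getElem? (by omega), Option.some_inj] at h₁
  rw [← h₁, add_right_comm]

lemma occursAt_of_map_range_eq {x : ℕ → ℕ} {n : ℕ} {l z r : List ℕ}
    (h : (List.range n).map x = l ++ z ++ r) : OccursAt z x l.length := by
  have hlen := congrArg List.length h
  simp only [List.length_map, List.length_range, List.length_append] at hlen
  refine List.ext_getElem (by simp) fun j hj _ => ?_
  have := congrArg (·[l.length + j]?) h
  simp only [List.getElem?_map, List.getElem?_range (by omega : l.length + j < n),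
    List.append_assoc, List.getElem?_append_right (Nat.le_add_right _ _), Nat.add_sub_cancel_left,
    List.getElem?_append_left hj, Option.map_some, List.getElem?_eq_getElem hj,
    Option.some_inj] at this
  simp [this]

lemma countBelow_succ (x : ℕ → ℕ) (a n : ℕ) :
    countBelow x a (n + 1) = countBelow x a n + if x n = a then 1 else 0 := by
  simp only [countBelow, Finset.range_add_one, Finset.filter_insert]
  split <;> simp [Finset.card_insert_of_notMem]

lemma countBelow_eq_count (x : ℕ → ℕ) (a n : ℕ) :
    countBelow x a n = ((List.range n).map x).count a := by
  induction n with
  | zero => rfl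
  | succ n ih => simp [countBelow_succ, ih, List.range_succ, List.count_singleton]

lemma FactorHasPeriod.add_eq_add {x g : ℕ → ℕ} (F : ℕ → ℕ) (hg : ∀ t, g (t + 1) = g t + F (x t))
    {i L p j : ℕ} (h : FactorHasPeriod x i L p) (hj : j + p ≤ L) :
    g (i + j + p) + g i = g (i + p) + g (i + j) := by
  induction j with
  | zero => simp
  | succ j ih =>
    have hx := h j (by omega)
    have h₁ := hg (i + j + p)
    have h₂ := hg (i + j)
    rw [show i + (j + 1) + p = i + j + p + 1 by ring, show i + (j + 1) = i + j + 1 by ring, h₁, h₂,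
      hx]
    linarith [ih (by omega)]

/-- Look at a maximum of `y` on `[0, N]`: it can be moved neither by `+ p` nor by `- c`. -/
lemma add_two_le_of_shifts_increase {y : ℕ → ℝ} {N p c : ℕ} {θ δ : ℝ} (hθ : 0 < θ) (hδ : 0 < δ)
    (hp : ∀ j, j + p ≤ N → y (j + p) = y j + θ) (hc : ∀ j, c ≤ j → j ≤ N → y (j - c) = y j + δ) :
    N + 2 ≤ p + c := by
  obtain ⟨j, hj, hmax⟩ := (Finset.range (N + 1)).exists_max_image y ⟨0, by simp⟩
  rw [Finset.mem_range] at hj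
  have h₁ : N < j + p := by
    by_contra! h
    have := hmax (j + p) (by simp; omega)
    rw [hp j h] at this
    linarith
  have h₂ : j < c := by
    by_contra! h
    have := hmax (j - c) (by simp; omega)
    rw [hc j h (by omega)] at this
    linarith
  omega

namespace SqrtTwo

open Real

noncomputable section

def beatty (n : ℕ) : ℕ := ⌊((n : ℝ) + 1) * √2⌋₊

def fract (n : ℕ) : ℝ := Int.fract (((n : ℝ) + 1) * √2)

lemma beatty_add_fract (n : ℕ) : (beatty n : ℝ) + fract n = (n + 1) * √2 := by
  rw [fract, ← Int.self_sub_floor, beatty, natCast_floor_eq_intCast_floor (by positivity)]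
  ring

lemma fract_nonneg (n : ℕ) : 0 ≤ fract n := Int.fract_nonneg _

lemma fract_lt_one (n : ℕ) : fract n < 1 := Int.fract_lt_one _

lemma fract_pos (n : ℕ) : 0 < fract n := by
  refine (fract_nonneg n).lt_of_ne' fun h => ?_
  have h' := beatty_add_fract n
  rw [h, add_zero] at h'
  exact (irrational_sqrt_two.natCast_mul n.succ_ne_zero).ne_nat (beatty n)
    (by push_cast; linarith)

lemma fract_eq_of {n : ℕ} {z : ℤ} {y : ℝ} (h : ((n : ℝ) + 1) * √2 = z + y) (hy₀ : 0 ≤ y)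
    (hy₁ : y < 1) : fract n = y := by
  rw [fract, h, Int.fract_intCast_add, Int.fract_eq_self.2 ⟨hy₀, hy₁⟩]

lemma beatty_eq_of {n b : ℕ} (h₁ : (b : ℝ) ≤ (n + 1) * √2) (h₂ : (n + 1) * √2 < b + 1) :
    beatty n = b :=
  (Nat.floor_eq_iff (by positivity)).2 ⟨h₁, h₂⟩

lemma beatty_add_lt (t m : ℕ) : (beatty (t + m) : ℝ) < beatty t + m * √2 + 1 := by
  have h₁ := beatty_add_fract t
  have h₂ := beatty_add_fract (t + m)
  push_cast at h₂
  linarith [fract_nonneg (t + m), fract_lt_one t]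

lemma lt_beatty_add (t m : ℕ) : (beatty t : ℝ) + m * √2 - 1 < beatty (t + m) := by
  have h₁ := beatty_add_fract t
  have h₂ := beatty_add_fract (t + m)
  push_cast at h₂
  linarith [fract_nonneg t, fract_lt_one (t + m)]

lemma beatty_mono : Monotone beatty := fun _ _ h => Nat.floor_mono (by gcongr)

lemma beatty_zero : beatty 0 = 1 :=
  beatty_eq_of (by simp [one_lt_sqrt_two.le]) (by norm_num [sqrt_two_lt_three_halves])

lemma beatty_lt_beatty_succ (n : ℕ) : beatty n < beatty (n + 1) := by
  have h := lt_beatty_add n 1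
  push_cast at h
  exact_mod_cast (show (beatty n : ℝ) < beatty (n + 1) by linarith [one_lt_sqrt_two])

-- `beatty (n + 1) - beatty n ∈ {1, 2}`, so the subtraction never truncates.
def word (n : ℕ) : ℕ := beatty (n + 1) - beatty n - 1

lemma beatty_succ (n : ℕ) : beatty (n + 1) = beatty n + (1 + word n) := by
  have := beatty_lt_beatty_succ n
  unfold word
  omega

lemma word_le_one (n : ℕ) : word n ≤ 1 := by
  have h : (beatty (n + 1) : ℝ) < beatty n + 3 := by
    have := beatty_add_lt n 1
    push_cast at this
    linarith [sqrt_two_lt_three_halves]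
  have : beatty (n + 1) < beatty n + 3 := by exact_mod_cast h
  unfold word
  omega

lemma word_eq_zero_or_succ_eq_zero (n : ℕ) : word n = 0 ∨ word (n + 1) = 0 := by
  have h : (beatty (n + 1 + 1) : ℝ) < beatty n + 4 := by
    have := beatty_add_lt n 2
    push_cast at this
    linarith [sqrt_two_lt_three_halves]
  have : beatty (n + 1 + 1) < beatty n + 4 := by exact_mod_cast h
  have := beatty_succ n
  have := beatty_succ (n + 1)
  omega

lemma countBelow_add_beatty (n : ℕ) : countBelow word 0 n + beatty n = 2 * n + 1 := by
  induction n with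
  | zero => simp [countBelow, beatty_zero]
  | succ n ih =>
    rw [countBelow_succ, beatty_succ]
    have := word_le_one n
    split <;> omega

lemma stdWord_d2_add_two (k : ℕ) :
    stdWord d2 (k + 2) = stdWord d2 (k + 1) ++ stdWord d2 (k + 1) ++ stdWord d2 k := by
  simp [stdWord, d2, List.replicate, List.append_assoc]

def morphism (a : ℕ) : List ℕ := if a = 0 then [0, 1] else [0, 1, 0]

lemma stdWord_d2_succ (k : ℕ) : stdWord d2 (k + 1) = (stdWord d2 k).flatMap morphism := by
  induction k using Nat.twoStepInduction with
  | zero => simp [stdWord, d2, morphism]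
  | one => simp [stdWord, d2, morphism]
  | more k ih₁ ih₂ =>
    rw [stdWord_d2_add_two (k + 1)]
    conv_rhs =>
      rw [stdWord_d2_add_two k, List.flatMap_append, List.flatMap_append, ← ih₁, ← ih₂]

lemma one_le_beatty (n : ℕ) : 1 ≤ beatty n :=
  Nat.le_floor (by push_cast; nlinarith [one_lt_sqrt_two, (n.cast_nonneg : (0 : ℝ) ≤ n)])

def phi (n : ℕ) : ℕ := n + beatty n - 1

lemma beatty_phi_add {n m v : ℕ} (h₁ : (v : ℝ) ≤ 2 + (m - 1) * √2 - (√2 - 1) * fract n)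
    (h₂ : 2 + (m - 1) * √2 - (√2 - 1) * fract n < v + 1) :
    beatty (phi n + m) = 2 * n + beatty n + v := by
  have hB := beatty_add_fract n
  have hB₂ : (beatty n : ℝ) * √2 = 2 * (n + 1) - fract n * √2 := by
    linear_combination √2 * hB + (n + 1) * sq_sqrt (zero_le_two (α := ℝ))
  have hphi : ((phi n + m : ℕ) : ℝ) + 1 = n + beatty n + m := by
    have := one_le_beatty n
    rw [phi, Nat.cast_add, Nat.cast_sub (by omega)]
    push_cast
    ring
  apply beatty_eq_of <;> rw [hphi] <;> push_cast <;> linarith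

lemma word_phi (n : ℕ) : word (phi n) = 0 ∧ word (phi n + 1) = 1 ∧ word (phi n + 2) = 0 := by
  have hX₀ := fract_pos n
  have hX₁ := fract_lt_one n
  have hs₁ := one_lt_sqrt_two
  have hs₂ := sqrt_two_lt_three_halves
  have hp₀ : 0 < (√2 - 1) * fract n := by nlinarith
  have hp₁ : (√2 - 1) * fract n < √2 - 1 := by nlinarith
  have h₀ := beatty_phi_add (m := 0) (v := 0) (by push_cast; linarith) (by push_cast; linarith)
  have h₁ := beatty_phi_add (m := 1) (v := 1) (by push_cast; linarith) (by push_cast; linarith)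
  have h₂ := beatty_phi_add (m := 2) (v := 3) (by push_cast; linarith) (by push_cast; linarith)
  have h₃ := beatty_phi_add (m := 3) (v := 4) (by push_cast; linarith) (by push_cast; linarith)
  simp only [add_zero] at h₀
  simp only [word, h₀, h₁, h₂, h₃, show phi n + 1 + 1 = phi n + 2 by rfl,
    show phi n + 2 + 1 = phi n + 3 by rfl]
  omega

lemma phi_zero : phi 0 = 0 := by simp [phi, beatty_zero]

lemma phi_succ (n : ℕ) : phi (n + 1) = phi n + 2 + word n := by
  have := beatty_succ n
  have := one_le_beatty n
  unfold phi
  omega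

lemma word_zero : word 0 = 0 := by simpa [phi_zero] using (word_phi 0).1

lemma flatMap_morphism_map_range (n : ℕ) :
    ((List.range n).map word).flatMap morphism = (List.range (phi n)).map word := by
  induction n with
  | zero => simp [phi_zero]
  | succ n ih =>
    obtain ⟨h₀, h₁, h₂⟩ := word_phi n
    rw [List.range_succ, List.map_append, List.flatMap_append, ih, phi_succ]
    rcases Nat.le_one_iff_eq_zero_or_eq_one.1 (word_le_one n) with h | h <;>
      simp [h, morphism, List.range_succ, h₀, h₁, h₂]

def stdLen (k : ℕ) : ℕ := (stdWord d2 k).length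

lemma stdWord_d2_eq_map_range (k : ℕ) : stdWord d2 k = (List.range (stdLen k)).map word := by
  induction k with
  | zero => simp [stdLen, stdWord, word_zero]
  | succ k ih =>
    have h : stdWord d2 (k + 1) = (List.range (phi (stdLen k))).map word := by
      rw [stdWord_d2_succ, ih, flatMap_morphism_map_range]
    simp only [stdLen, h, List.length_map, List.length_range]

lemma stdLen_zero : stdLen 0 = 1 := rfl

lemma stdLen_one : stdLen 1 = 2 := by simp [stdLen, stdWord, d2]

lemma stdLen_add_two (k : ℕ) : stdLen (k + 2) = 2 * stdLen (k + 1) + stdLen k := by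
  simp only [stdLen, stdWord_d2_add_two, List.length_append]
  ring

lemma succ_le_stdLen (k : ℕ) : k + 1 ≤ stdLen k := by
  induction k using Nat.twoStepInduction with
  | zero => simp [stdLen_zero]
  | one => simp [stdLen_one]
  | more k ih₁ ih₂ => rw [stdLen_add_two]; omega

lemma charWord_d2 : charWord d2 = word := by
  funext n
  have := succ_le_stdLen (n + 1)
  rw [charWord, stdWord_d2_eq_map_range, List.getD_eq_getElem?_getD, List.getElem?_map,
    List.getElem?_range (by omega)]
  rfl

lemma stdWord_d2_append_swap (k : ℕ) : ∃ u x y,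
    stdWord d2 (k + 1) ++ stdWord d2 k = u ++ [x, y] ∧
      stdWord d2 k ++ stdWord d2 (k + 1) = u ++ [y, x] := by
  induction k with
  | zero => exact ⟨[0], 1, 0, by simp [stdWord, d2], by simp [stdWord, d2]⟩
  | succ k ih =>
    obtain ⟨u, x, y, h₁, h₂⟩ := ih
    refine ⟨stdWord d2 (k + 1) ++ stdWord d2 (k + 1) ++ u, y, x, ?_, ?_⟩ <;>
      simp only [stdWord_d2_add_two, List.append_assoc] at h₁ h₂ ⊢
    · rw [h₂]
    · rw [h₁]

lemma count_stdWord_d2_zero (k : ℕ) : (stdWord d2 k).count 0 % 2 = 1 := by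
  induction k using Nat.twoStepInduction with
  | zero => rfl
  | one => simp [stdWord, d2]
  | more k ih₁ ih₂ =>
    rw [stdWord_d2_add_two, List.count_append, List.count_append]
    omega

lemma countBelow_stdLen (k : ℕ) : countBelow word 0 (stdLen k) % 2 = 1 := by
  rw [countBelow_eq_count, ← stdWord_d2_eq_map_range]
  exact count_stdWord_d2_zero k

/-- Writing `a = s_{k+1}`, `b = s_k` and `ab = u xy`, `ba = u yx`, the word
`s_{k+3} = a a b a a b a` contains `a u` at positions `|a|` and `|a| + |ab|`. -/
lemma factorHasPeriod_word (k : ℕ) :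
    FactorHasPeriod word (stdLen (k + 1)) (3 * stdLen (k + 1) + 2 * stdLen k - 2)
      (stdLen (k + 1) + stdLen k) := by
  obtain ⟨u, x, y, h₁, h₂⟩ := stdWord_d2_append_swap k
  have hu : u.length + 2 = stdLen (k + 1) + stdLen k := by
    have := congrArg List.length h₁
    simp only [List.length_append, List.length_cons, List.length_nil] at this
    rw [stdLen, stdLen]
    omega
  have h₁' : ∀ r, u ++ x :: y :: r = stdWord d2 (k + 1) ++ (stdWord d2 k ++ r) := fun r => by
    simpa using congrArg (· ++ r) h₁.symm
  have h₂' : ∀ r, u ++ y :: x :: r = stdWord d2 k ++ (stdWord d2 (k + 1) ++ r) := fun r => by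
    simpa using congrArg (· ++ r) h₂.symm
  have hs := stdWord_d2_eq_map_range (k + 3)
  rw [stdWord_d2_add_two (k + 1), stdWord_d2_add_two k] at hs
  have hocc₁ : OccursAt (stdWord d2 (k + 1) ++ u) word (stdLen (k + 1)) :=
    occursAt_of_map_range_eq (l := stdWord d2 (k + 1))
      (r := [y, x] ++ stdWord d2 (k + 1) ++ stdWord d2 k ++ stdWord d2 (k + 1)) (by
        rw [← hs]
        simp only [List.append_assoc, List.cons_append, List.nil_append, h₂'])
  have hocc₂ : OccursAt (stdWord d2 (k + 1) ++ u) word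
      (stdLen (k + 1) + (stdLen (k + 1) + stdLen k)) := by
    have := occursAt_of_map_range_eq (z := stdWord d2 (k + 1) ++ u)
      (l := stdWord d2 (k + 1) ++ stdWord d2 (k + 1) ++ stdWord d2 k)
      (r := [x, y] ++ stdWord d2 (k + 1)) (by
        rw [← hs]
        simp only [List.append_assoc, List.cons_append, List.nil_append, h₁'])
    simpa [stdLen, add_assoc] using this
  have := hocc₁.factorHasPeriod hocc₂
  rwa [List.length_append, show (stdWord d2 (k + 1)).length = stdLen (k + 1) from rfl,
    show stdLen (k + 1) + u.length + (stdLen (k + 1) + stdLen k)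
      = 3 * stdLen (k + 1) + 2 * stdLen k - 2 by omega] at this

lemma x3_eq (n : ℕ) : x3 n = if word n = 0 then countBelow word 0 n % 2 else 2 := by
  rw [x3, charWord_d2]

lemma x3_eq_x3_iff {t t' : ℕ} : x3 t = x3 t' ↔
    word t = word t' ∧ (word t = 0 → countBelow word 0 t % 2 = countBelow word 0 t' % 2) := by
  rw [x3_eq, x3_eq]
  rcases Nat.le_one_iff_eq_zero_or_eq_one.1 (word_le_one t) with h | h <;>
    rcases Nat.le_one_iff_eq_zero_or_eq_one.1 (word_le_one t') with h' | h' <;>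
    simp [h, h'] <;> omega

lemma factorHasPeriod_x3_iff {i L p : ℕ} (hL : p + 2 ≤ L) : FactorHasPeriod x3 i L p ↔
    FactorHasPeriod word i L p ∧ countBelow word 0 (i + p) % 2 = countBelow word 0 i % 2 := by
  constructor
  · intro h
    have hw : FactorHasPeriod word i L p := fun j hj => (x3_eq_x3_iff.1 (h j hj)).1
    refine ⟨hw, ?_⟩
    obtain ⟨j, hj, hj₀⟩ : ∃ j ≤ 1, word (i + j) = 0 := by
      rcases word_eq_zero_or_succ_eq_zero i with h₀ | h₀
      exacts [⟨0, by omega, h₀⟩, ⟨1, le_rfl, h₀⟩]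
    have := (x3_eq_x3_iff.1 (h j (by omega))).2 hj₀
    have := hw.add_eq_add (fun b => if b = 0 then 1 else 0) (countBelow_succ word 0)
      (j := j) (by omega)
    omega
  · rintro ⟨hw, hpar⟩ j hj
    refine x3_eq_x3_iff.2 ⟨hw j hj, fun _ => ?_⟩
    have := hw.add_eq_add (fun b => if b = 0 then 1 else 0) (countBelow_succ word 0)
      (j := j) (by omega)
    omega

lemma fract_add_of_beatty_add_eq {t m d : ℕ} (h : beatty (t + m) = beatty t + d) :
    fract (t + m) = fract t + (m * √2 - d) := by
  have h₁ := beatty_add_fract t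
  have h₂ := beatty_add_fract (t + m)
  rw [h] at h₂
  push_cast at h₁ h₂
  linarith

/-- Since `p√2 - 2c = √2 (p - c√2)`, the shift `p - c√2` lies between `0` and the shift
`p√2 - 2c`, so `fract t + (p - c√2)` stays in `[0, 1)`. -/
lemma fract_sub_of_fract_add {t p c : ℕ} (hct : c ≤ t)
    (h : fract (t + p) = fract t + (p * √2 - 2 * c)) : fract (t - c) = fract t + (p - c * √2) := by
  have hθδ : (p * √2 - 2 * c : ℝ) = √2 * (p - c * √2) := by
    linear_combination (c : ℝ) * sq_sqrt (zero_le_two (α := ℝ))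
  have h₀ := fract_nonneg (t + p)
  have h₁ := fract_lt_one (t + p)
  have hX₀ := fract_nonneg t
  have hX₁ := fract_lt_one t
  have hs := one_lt_sqrt_two
  apply fract_eq_of (z := beatty t - p)
  · have hB := beatty_add_fract t
    rw [Nat.cast_sub hct]
    push_cast
    linear_combination -hB
  · rcases le_or_gt 0 (p - c * √2 : ℝ) with hδ | hδ
    · linarith
    · nlinarith
  · rcases le_or_gt 0 (p - c * √2 : ℝ) with hδ | hδ
    · nlinarith
    · linarith

lemma add_two_le_of_beatty_add_eq {i L p c : ℕ} (hp : 0 < p) (hpL : p ≤ L)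
    (hD : ∀ j, j + p ≤ L → beatty (i + j + p) = beatty (i + j) + 2 * c) :
    L + 2 ≤ 2 * p + c := by
  set θ : ℝ := p * √2 - 2 * c with hθdef
  set δ : ℝ := p - c * √2
  have hθ : θ ≠ 0 := sub_ne_zero.2 <| by
    exact_mod_cast (irrational_sqrt_two.natCast_mul hp.ne').ne_nat (2 * c)
  have hθδ : θ = √2 * δ := by linear_combination (c : ℝ) * sq_sqrt (zero_le_two (α := ℝ))
  have hfwd : ∀ j, j + p ≤ L → fract (i + j + p) = fract (i + j) + θ := fun j hj => by
    rw [hθdef]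
    exact_mod_cast fract_add_of_beatty_add_eq (hD j hj)
  have hback : ∀ j, c ≤ j → j + p ≤ L → fract (i + j - c) = fract (i + j) + δ :=
    fun j hcj hj => fract_sub_of_fract_add (by omega) (by rw [← hθdef]; exact_mod_cast hfwd j hj)
  have hwindow : ∀ (y : ℕ → ℝ) (θ' δ' : ℝ), 0 < θ' → 0 < δ' →
      (∀ j, j + p ≤ L → y (j + p) = y j + θ') → (∀ j, c ≤ j → j + p ≤ L → y (j - c) = y j + δ') →
      L + 2 ≤ 2 * p + c := fun y θ' δ' hθ' hδ' hf hb => by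
    have := add_two_le_of_shifts_increase (N := L - p) hθ' hδ' (fun j hj => hf j (by omega))
      (fun j hcj hj => hb j hcj (by omega))
    omega
  rcases hθ.lt_or_gt with hneg | hpos
  · refine hwindow (fun j => -fract (i + j)) (-θ) (-δ) (by linarith)
      (by nlinarith [one_lt_sqrt_two]) (fun j hj => ?_) (fun j hcj hj => ?_)
    · simp only [← add_assoc, hfwd j hj]; ring
    · simp only [← Nat.add_sub_assoc hcj, hback j hcj hj]; ring
  · refine hwindow (fun j => fract (i + j)) θ δ hpos
      (by nlinarith [one_lt_sqrt_two]) (fun j hj => ?_) (fun j hcj hj => ?_)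
    · simp only [← add_assoc, hfwd j hj]
    · simp only [← Nat.add_sub_assoc hcj, hback j hcj hj]

lemma length_le_of_factorHasPeriod_x3 {i L p : ℕ} (hp : 0 < p) (h : FactorHasPeriod x3 i L p) :
    (L : ℝ) ≤ (2 + √2 / 2) * p := by
  have hs := one_lt_sqrt_two
  rcases le_or_gt L (p + 1) with hL | hL
  · have : (L : ℝ) ≤ p + 1 := by exact_mod_cast hL
    have : (1 : ℝ) ≤ p := by exact_mod_cast hp
    nlinarith
  obtain ⟨hw, hpar⟩ := (factorHasPeriod_x3_iff hL).1 h
  have h₁ := countBelow_add_beatty (i + p)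
  have h₂ := countBelow_add_beatty i
  have h₃ := beatty_mono (Nat.le_add_right i p)
  obtain ⟨c, hc⟩ : ∃ c, beatty (i + p) = beatty i + 2 * c :=
    ⟨(beatty (i + p) - beatty i) / 2, by omega⟩
  have hD : ∀ j, j + p ≤ L → beatty (i + j + p) = beatty (i + j) + 2 * c := fun j hj => by
    have := hw.add_eq_add (1 + ·) beatty_succ hj
    omega
  have hLc : (L : ℝ) + 2 ≤ 2 * p + c := by
    exact_mod_cast add_two_le_of_beatty_add_eq hp (by omega) hD
  have hc' : (2 * c : ℝ) < p * √2 + 1 := by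
    have := beatty_add_lt i p
    rw [hc] at this
    push_cast at this
    linarith
  nlinarith

lemma le_of_mem_expSet_x3 {e : ℝ} (he : e ∈ expSet x3) : e ≤ 2 + √2 / 2 := by
  obtain ⟨i, L, p, -, hp, h, rfl⟩ := mem_expSet_iff.1 he
  rw [div_le_iff₀ (by exact_mod_cast hp)]
  exact length_le_of_factorHasPeriod_x3 hp h

def stdExponent (k : ℕ) : ℝ :=
  ((3 * stdLen (k + 1) + 2 * stdLen k - 2 : ℕ) : ℝ) / (stdLen (k + 1) + stdLen k : ℕ)

lemma stdExponent_mem_expSet_x3 (k : ℕ) : stdExponent k ∈ expSet x3 := by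
  have := succ_le_stdLen k
  have := succ_le_stdLen (k + 1)
  refine mem_expSet_iff.2 ⟨stdLen (k + 1), _, _, by omega, by omega, ?_, rfl⟩
  refine (factorHasPeriod_x3_iff (by omega)).2 ⟨factorHasPeriod_word k, ?_⟩
  rw [← add_assoc, ← two_mul, ← stdLen_add_two, countBelow_stdLen, countBelow_stdLen]

lemma stdLen_pell (k : ℕ) :
    ((stdLen (k + 1) + stdLen k : ℕ) : ℤ) ^ 2 - 2 * (stdLen (k + 1) : ℤ) ^ 2 = (-1) ^ k := by
  induction k with
  | zero => simp [stdLen_zero, stdLen_one]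
  | succ k ih =>
    rw [stdLen_add_two, pow_succ]
    push_cast at ih ⊢
    linear_combination (-1 : ℤ) * ih

lemma sub_le_stdExponent (k : ℕ) : 2 + √2 / 2 - 3 * (1 / ((k : ℝ) + 1)) ≤ stdExponent k := by
  have ha : 2 ≤ stdLen (k + 1) := by have := succ_le_stdLen (k + 1); omega
  have hk : k + 1 ≤ stdLen k := succ_le_stdLen k
  have hpell : (stdLen (k + 1) + stdLen k : ℤ) ^ 2 ≤ 2 * stdLen (k + 1) ^ 2 + 1 := by
    have h := stdLen_pell k
    push_cast at h
    rcases neg_one_pow_eq_or ℤ k with h' | h' <;> rw [h'] at h <;> linarith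
  unfold stdExponent
  generalize stdLen (k + 1) = a at *
  generalize stdLen k = b at *
  have hpell : ((a + b : ℕ) : ℝ) ^ 2 ≤ 2 * a ^ 2 + 1 := by exact_mod_cast hpell
  have hsqrt : (a + b : ℕ) * √2 ≤ 2 * a + 2 := by
    nlinarith [sq_sqrt (zero_le_two (α := ℝ)), sqrt_nonneg 2]
  have hp : ((k : ℝ) + 1) ≤ (a + b : ℕ) := by exact_mod_cast (by omega : k + 1 ≤ a + b)
  have hp₀ : (0 : ℝ) < (a + b : ℕ) := by linarith
  rw [le_div_iff₀ hp₀, Nat.cast_sub (by omega)]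
  calc (2 + √2 / 2 - 3 * (1 / ((k : ℝ) + 1))) * (a + b : ℕ)
      ≤ (2 + √2 / 2 - 3 / (a + b : ℕ)) * (a + b : ℕ) := by
        gcongr
        rw [mul_one_div]
        gcongr
    _ ≤ ((3 * a + 2 * b : ℕ) : ℝ) - (2 : ℕ) := by
        rw [sub_mul, div_mul_cancel₀ _ hp₀.ne']
        push_cast at hsqrt ⊢
        linarith

end

end SqrtTwo

theorem critical_exponent_x3 :
    sSup (expSet x3) = 2 + Real.sqrt 2 / 2 := by
  have hle : ∀ e ∈ expSet x3, e ≤ 2 + √2 / 2 := fun _ he => SqrtTwo.le_of_mem_expSet_x3 he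
  refine le_antisymm (csSup_le ⟨_, SqrtTwo.stdExponent_mem_expSet_x3 0⟩ hle) ?_
  have hlim : Filter.Tendsto (fun k : ℕ => 2 + √2 / 2 - 3 * (1 / ((k : ℝ) + 1))) Filter.atTop
      (nhds (2 + √2 / 2)) := by
    simpa using (tendsto_one_div_add_atTop_nhds_zero_nat.const_mul 3).const_sub (2 + √2 / 2)
  exact le_of_tendsto' hlim fun k =>
    (SqrtTwo.sub_le_stdExponent k).trans (le_csSup ⟨_, hle⟩ (SqrtTwo.stdExponent_mem_expSet_x3 k))
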